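/- If a sequence of nonnegative reals (u_n) satisfies u_0 = C_0 and the recursion u_{n+1} = \sum_{k=0}^{n} \binom{n}{k} u_k u_{n-k} for all n, then u_n = C_0^{n+1} \cdot n! for all n. -/
import Mathlib


theorem stmt_0 (C₀ : ℝ) (hC₀ : 0 < C₀) (u : ℕ → ℝ) (hpos : ∀ n, 0 ≤ u n)
    (h0 : u 0 = C₀)
    (hrec : ∀ n, u (n + 1) = ∑ k ∈ Finset.range (n + 1), (n.choose k : ℝ) * u k * u (n - k)) :
    ∀ n, u n = C₀ ^ (n + 1) * (n.factorial : ℝ) := by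
  intro n
  induction n using Nat.strong_induction_on with
  | _ n ih =>
    match n with
    | 0 => simpa using h0
    | (m + 1) =>
      rw [hrec m]
      have hsum : ∀ k ∈ Finset.range (m + 1),
          (m.choose k : ℝ) * u k * u (m - k)
            = C₀ ^ (m + 2) * (m.factorial : ℝ) := by
        intro k hk
        have hk' : k ≤ m := Nat.lt_succ_iff.mp (Finset.mem_range.mp hk)
        rw [ih k (Nat.lt_succ_of_le hk'), ih (m - k) (Nat.lt_succ_of_le (Nat.sub_le m k))]
        have hfac : (m.choose k : ℝ) * k.factorial * (m - k).factorial = m.factorial := by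
          rw [← Nat.cast_mul, ← Nat.cast_mul, Nat.choose_mul_factorial_mul_factorial hk']
        have hpow : C₀ ^ (k + 1) * C₀ ^ (m - k + 1) = C₀ ^ (m + 2) := by
          rw [← pow_add]; congr 1; omega
        rw [← hpow, ← hfac]
        ring
      rw [Finset.sum_congr rfl hsum, Finset.sum_const, Finset.card_range]
      push_cast [Nat.factorial_succ]
      ring
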